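/- arXiv:2107.06567 — 2 statements merged into one kernel-verified Lean document; each statement's English description precedes it below -/
import Mathlib

section
/- Let (Φ,X) and (Ψ,Y) be flows with global Poincaré sections S and S′, and (h,τ) a weak morphism with h⁻¹(S′) = S. Then the restriction h|_S : S → S′ satisfies h|_S ∘ PΦ = PΨ ∘ h|_S, i.e., it is a morphism of map dynamical systems from (PΦ,S) to (PΨ,S′). -/
open Set Function Topology

structure FlowLaw {X : Type*} [TopologicalSpace X] (Φ : X → ℝ → X) : Prop where
  cont : Continuous fun p : X × ℝ => Φ p.1 p.2
  map_zero : ∀ x, Φ x 0 = x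
  map_add : ∀ x t s, Φ (Φ x t) s = Φ x (t + s)

/-- `S` is topologically transversal to the flow `Φ` on an `(n+1)`-dimensional
topological manifold: `S` is a codimension-one locally flat submanifold (via flow-box
like charts onto the unit ball sending `S` to the hyperplane slice), with locally
uniform entry/exit time bounds `δ₊ > 0 > δ₋` such that the short forward and backward
orbit segments lie in different connected components of `U \ S` and meet `S` only at the
base point; moreover `Φ(y,[a,b]) ∩ S` is compact for all `y, a, b`. -/
structure IsTransversal {X : Type*} [TopologicalSpace X] (n : ℕ)
    (Φ : X → ℝ → X) (S : Set X) : Prop where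
  compact_inter : ∀ y : X, ∀ a b : ℝ, IsCompact ((fun t => Φ y t) '' Set.Icc a b ∩ S)
  trans : ∃ δp δm : X → ℝ,
    (∀ x ∈ S, 0 < δp x ∧ δm x < 0) ∧
    ∀ x ∈ S, ∃ U : Set X, IsOpen U ∧ x ∈ U ∧
      (∃ φ : ↥U ≃ₜ ↥(Metric.ball (0 : EuclideanSpace ℝ (Fin (n+1))) 1),
        ∀ y : U, (y : X) ∈ S ↔ (φ y : EuclideanSpace ℝ (Fin (n+1))) (Fin.last n) = 0) ∧
      (∀ t ∈ Set.Icc (δm x) (δp x), t ≠ 0 → Φ x t ∈ U \ S) ∧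
      connectedComponentIn (U \ S) (Φ x (δm x)) ≠ connectedComponentIn (U \ S) (Φ x (δp x)) ∧
      (∃ V ⊆ U, IsOpen V ∧ x ∈ V ∧ ∃ δ > 0, ∀ y ∈ V ∩ S, δ < δp y ∧ δm y < -δ)

/-- A global Poincaré section: a topologically transversal submanifold met by every
orbit in forward and in backward time. -/
structure IsGlobalSection {X : Type*} [TopologicalSpace X] (n : ℕ)
    (Φ : X → ℝ → X) (S : Set X) : Prop where
  transversal : IsTransversal n Φ S
  forward : ∀ x : X, ∃ t > 0, Φ x t ∈ S
  backward : ∀ x : X, ∃ t < 0, Φ x t ∈ S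

/-- `T` is the first return time of the flow `Φ` to the section `S`: it is positive,
attained, and no earlier positive time returns to `S`. -/
def IsFirstReturn {X : Type*} (Φ : X → ℝ → X) (S : Set X) (T : X → ℝ) : Prop :=
  ∀ x ∈ S, 0 < T x ∧ Φ x (T x) ∈ S ∧ ∀ t ∈ Set.Ioo 0 (T x), Φ x t ∉ S

/-- A weak morphism of flows: a continuous map `h` together with time
reparametrizations `τ x : ℝ → ℝ`, each an increasing homeomorphism fixing `0`. -/
structure IsWeakMorphism {X Y : Type*} [TopologicalSpace X] [TopologicalSpace Y]
    (Φ : X → ℝ → X) (Ψ : Y → ℝ → Y) (h : X → Y) (τ : X → ℝ → ℝ) : Prop where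
  cont : Continuous h
  equivariant : ∀ x t, h (Φ x t) = Ψ (h x) (τ x t)
  time_cont : ∀ x, Continuous (τ x)
  mono : ∀ x, StrictMono (τ x)
  surj : ∀ x, Function.Surjective (τ x)
  time_zero : ∀ x, τ x 0 = 0

/-!
Since `h⁻¹(S′) = S`, the equivariance `h (Φ x t) = Ψ (h x) (τ x t)` gives
`Φ x t ∈ S ↔ Ψ (h x) (τ x t) ∈ S′`. As `τ x` is an increasing bijection of `ℝ` fixing `0`,
it carries the first positive time at which the `Φ`-orbit of `x` meets `S` to the first
positive time at which the `Ψ`-orbit of `h x` meets `S′`, i.e. `TΨ (h x) = τ x (TΦ x)`.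
-/

lemma IsFirstReturn.eq_of_forall_notMem {X : Type*} {Φ : X → ℝ → X} {S : Set X} {T : X → ℝ}
    (hT : IsFirstReturn Φ S T) {x : X} (hx : x ∈ S) {t : ℝ} (ht : 0 < t) (htS : Φ x t ∈ S)
    (hmin : ∀ s ∈ Ioo 0 t, Φ x s ∉ S) : T x = t := by
  obtain ⟨hT0, hTS, hTmin⟩ := hT x hx
  exact le_antisymm (not_lt.1 fun hlt => hTmin _ ⟨ht, hlt⟩ htS)
    (not_lt.1 fun hlt => hmin _ ⟨hT0, hlt⟩ hTS)

namespace IsWeakMorphism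

variable {X Y : Type*} [TopologicalSpace X] [TopologicalSpace Y]
  {Φ : X → ℝ → X} {Ψ : Y → ℝ → Y} {h : X → Y} {τ : X → ℝ → ℝ} {S : Set X} {S' : Set Y}

lemma time_pos_iff (hw : IsWeakMorphism Φ Ψ h τ) (x : X) {t : ℝ} : 0 < τ x t ↔ 0 < t := by
  simpa only [hw.time_zero x] using (hw.mono x).lt_iff_lt (a := 0) (b := t)

lemma mem_iff_of_preimage_eq (hw : IsWeakMorphism Φ Ψ h τ) (hpre : h ⁻¹' S' = S)
    (x : X) (t : ℝ) : Φ x t ∈ S ↔ Ψ (h x) (τ x t) ∈ S' := by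
  rw [← hpre, mem_preimage, hw.equivariant]

lemma firstReturn_eq_time_firstReturn (hw : IsWeakMorphism Φ Ψ h τ) (hpre : h ⁻¹' S' = S)
    {TΦ : X → ℝ} {TΨ : Y → ℝ} (hTΦ : IsFirstReturn Φ S TΦ) (hTΨ : IsFirstReturn Ψ S' TΨ)
    {x : X} (hx : x ∈ S) : TΨ (h x) = τ x (TΦ x) := by
  obtain ⟨hT0, hTS, hTmin⟩ := hTΦ x hx
  refine hTΨ.eq_of_forall_notMem (hpre.ge hx) ((hw.time_pos_iff x).2 hT0)
    ((hw.mem_iff_of_preimage_eq hpre x _).1 hTS) ?_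
  rintro s ⟨hs0, hsT⟩ hsS
  obtain ⟨t, rfl⟩ := hw.surj x s
  exact hTmin t ⟨(hw.time_pos_iff x).1 hs0, (hw.mono x).lt_iff_lt.1 hsT⟩
    ((hw.mem_iff_of_preimage_eq hpre x t).2 hsS)

end IsWeakMorphism

theorem poincare_map_functorial_general {X Y : Type*} [TopologicalSpace X] [TopologicalSpace Y]
    (Φ : X → ℝ → X) (S : Set X) (Ψ : Y → ℝ → Y) (S' : Set Y)
    (TΦ : X → ℝ) (TΨ : Y → ℝ) (hTΦ : IsFirstReturn Φ S TΦ) (hTΨ : IsFirstReturn Ψ S' TΨ)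
    (h : X → Y) (τ : X → ℝ → ℝ) (hw : IsWeakMorphism Φ Ψ h τ)
    (hpre : h ⁻¹' S' = S) :
    (Set.MapsTo h S S') ∧
    ∀ x ∈ S, h (Φ x (TΦ x)) = Ψ (h x) (TΨ (h x)) := by
  refine ⟨mapsTo_iff_subset_preimage.2 hpre.ge, fun x hx => ?_⟩
  rw [hw.equivariant, hw.firstReturn_eq_time_firstReturn hpre hTΦ hTΨ hx]

/-- if `(h,τ)` is a weak morphism with `h⁻¹(S′) = S`, then the restriction
of `h` to the sections intertwines the Poincaré maps: `h ∘ PΦ = PΨ ∘ h` on `S`; i.e. it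
is a morphism of map dynamical systems `(PΦ, S) → (PΨ, S′)`. -/
theorem poincare_map_functorial {X Y : Type*} [TopologicalSpace X] [T2Space X]
    [SecondCountableTopology X] [TopologicalSpace Y] [T2Space Y]
    [SecondCountableTopology Y] {n m : ℕ}
    (Φ : X → ℝ → X) (S : Set X) (Ψ : Y → ℝ → Y) (S' : Set Y)
    (lawΦ : FlowLaw Φ) (lawΨ : FlowLaw Ψ)
    (hgs : IsGlobalSection n Φ S) (hgs' : IsGlobalSection m Ψ S')
    (TΦ : X → ℝ) (TΨ : Y → ℝ) (hTΦ : IsFirstReturn Φ S TΦ) (hTΨ : IsFirstReturn Ψ S' TΨ)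
    (h : X → Y) (τ : X → ℝ → ℝ) (hw : IsWeakMorphism Φ Ψ h τ)
    (hpre : h ⁻¹' S' = S) :
    (Set.MapsTo h S S') ∧
    ∀ x ∈ S, h (Φ x (TΦ x)) = Ψ (h x) (TΨ (h x)) :=
  poincare_map_functorial_general Φ S Ψ S' TΦ TΨ hTΦ hTΨ h τ hw hpre
end

section
/- Let (Φ,X) be a flow with global Poincaré section S, and τ([x,t],s) := ∫₀^{s+t} R_Φ(x)(u) du − t·T_Φ(x) with R_Φ(x)(u) := ∑_{i∈ℤ} T_Φ((PΦ)^i(x))·χ_{[i,i+1)}(u). Then for each fixed [x,t], the map s ↦ τ([x,t],s) is a strictly increasing homeomorphism of ℝ with τ([x,t],0) = 0. -/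
open Set Function Topology

/-- The relation generating the mapping torus identification `(x, t) ∼ (f x, t − 1)`
(so in particular `(x,1) ∼ (f x, 0)`). -/
def MTRel {X : Type*} [TopologicalSpace X] (f : X ≃ₜ X) : X × ℝ → X × ℝ → Prop :=
  fun p q => q.1 = f p.1 ∧ q.2 = p.2 - 1

/-- The mapping torus `X_f` of a homeomorphism `f : X → X`, with the quotient
topology.  Every point has a unique representative `[x,t]` with `0 ≤ t < 1`. -/
abbrev MappingTorus {X : Type*} [TopologicalSpace X] (f : X ≃ₜ X) : Type _ :=
  Quot (MTRel f)

/-- The class `[x,t]` of `(x,t)` in the mapping torus. -/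
def mtk {X : Type*} [TopologicalSpace X] (f : X ≃ₜ X) (x : X) (t : ℝ) :
    MappingTorus f := Quot.mk _ (x, t)

/-- The suspension flow `Σf` on the mapping torus; on classes it satisfies
`Σf([x,t],s) = [fⁿ x, s+t−n]` for the unique integer `n` with `s+t−1 < n ≤ s+t`. -/
def susp {X : Type*} [TopologicalSpace X] (f : X ≃ₜ X) (p : MappingTorus f) (s : ℝ) :
    MappingTorus f :=
  Quot.lift (fun q : X × ℝ => Quot.mk (MTRel f) (q.1, q.2 + s))
    (fun a b hab => Quot.sound ⟨hab.1, by rw [hab.2]; ring⟩) p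

/-- The zero section `(X_f)₀ = {[x,0] : x ∈ X}` of the mapping torus. -/
def zeroSection {X : Type*} [TopologicalSpace X] (f : X ≃ₜ X) : Set (MappingTorus f) :=
  {p | ∃ x : X, p = mtk f x 0}


/-- The piecewise constant function `R_Φ(x)(u) = T_Φ((PΦ)^i x)` for `u ∈ [i, i+1)`,
where the return map (a homeomorphism of the section) is given as `Pr`. -/
noncomputable def Rfun {X : Type*} [TopologicalSpace X] (T : X → ℝ) {S : Set X}
    (Pr : ↥S ≃ₜ ↥S) (x : ↥S) (u : ℝ) : ℝ :=
  T ((Pr.toEquiv ^ ⌊u⌋) x : ↥S)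

/-- The time part `τ([x,t],s) = ∫₀^{s+t} R_Φ(x)(u) du − t·T_Φ(x)` of the natural weak
morphism from the suspension of the Poincaré map to the original flow. -/
noncomputable def tauTime {X : Type*} [TopologicalSpace X] (T : X → ℝ) {S : Set X}
    (Pr : ↥S ≃ₜ ↥S) (x : ↥S) (t s : ℝ) : ℝ :=
  (∫ u in (0:ℝ)..(s + t), Rfun T Pr x u) - t * T (x : X)

/-! With `g i = T ((PΦ)^i x)`, `τ([x,t],s) = F (s + t) - t g 0` where `F` is the primitive of the
positive step function `u ↦ g ⌊u⌋`; so `τ` is continuous and strictly increasing, and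
`F t = t g 0` for `t ∈ [0, 1)` gives `τ([x,t],0) = 0`. For surjectivity, `F k` is the time at
which the orbit of `x` reaches `(PΦ)^k x ∈ S`. An orbit meets a transversal section only finitely
often in a compact time interval, so the strictly increasing values `F k`, `k ∈ ℤ`, are unbounded in both directions. -/

open Filter MeasureTheory

section FloorIntegral

noncomputable def floorIntegral (g : ℤ → ℝ) (r : ℝ) : ℝ :=
  ∫ u in (0 : ℝ)..r, g ⌊u⌋

variable (g : ℤ → ℝ)

theorem intervalIntegrable_comp_floor (a b : ℝ) :
    IntervalIntegrable (fun u : ℝ => g ⌊u⌋) volume a b := by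
  set C : ℝ := ∑ i ∈ Finset.Icc ⌊min a b⌋ ⌊max a b⌋, |g i|
  refine (intervalIntegrable_const (c := C)).mono_fun
    (measurable_from_top.comp Int.measurable_floor).aestronglyMeasurable.restrict ?_
  filter_upwards [ae_restrict_mem measurableSet_uIoc] with u hu
  have hu' : u ∈ Icc (min a b) (max a b) := Ioc_subset_Icc_self hu
  have hmem : ⌊u⌋ ∈ Finset.Icc ⌊min a b⌋ ⌊max a b⌋ :=
    Finset.mem_Icc.2 ⟨Int.floor_le_floor hu'.1, Int.floor_le_floor hu'.2⟩
  simp only [Real.norm_eq_abs]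
  exact (Finset.single_le_sum (fun i _ => abs_nonneg (g i)) hmem).trans (le_abs_self C)

theorem continuous_floorIntegral : Continuous (floorIntegral g) :=
  intervalIntegral.continuous_primitive (intervalIntegrable_comp_floor g) 0

theorem floorIntegral_sub_floorIntegral (a b : ℝ) :
    floorIntegral g b - floorIntegral g a = ∫ u in a..b, g ⌊u⌋ :=
  intervalIntegral.integral_interval_sub_left (intervalIntegrable_comp_floor g 0 b)
    (intervalIntegrable_comp_floor g 0 a)

theorem strictMono_floorIntegral (hg : ∀ i, 0 < g i) : StrictMono (floorIntegral g) := by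
  intro a b hab
  have := intervalIntegral.intervalIntegral_pos_of_pos_on (intervalIntegrable_comp_floor g a b)
    (fun u _ => hg ⌊u⌋) hab
  linarith [floorIntegral_sub_floorIntegral g a b]

/-- The endpoint `i + 1`, where `⌊v⌋` already jumps to `i + 1`, is a null set. -/
theorem integral_comp_floor_of_mem_Icc {i : ℤ} {u : ℝ} (hu : u ∈ Icc (i : ℝ) (i + 1)) :
    ∫ v in (i : ℝ)..u, g ⌊v⌋ = (u - i) * g i := by
  have hae : ∀ᵐ v : ℝ, v ∈ uIoc (i : ℝ) u → g ⌊v⌋ = g i := by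
    filter_upwards [compl_mem_ae_iff.2 (Real.volume_singleton (a := (i : ℝ) + 1))] with v hv hvu
    rw [uIoc_of_le hu.1] at hvu
    rw [Int.floor_eq_iff.2 ⟨hvu.1.le, lt_of_le_of_ne (hvu.2.trans hu.2) hv⟩]
  rw [intervalIntegral.integral_congr_ae hae, intervalIntegral.integral_const, smul_eq_mul]

theorem floorIntegral_zero : floorIntegral g 0 = 0 :=
  intervalIntegral.integral_same

theorem floorIntegral_of_mem_Icc {i : ℤ} {u : ℝ} (hu : u ∈ Icc (i : ℝ) (i + 1)) :
    floorIntegral g u = floorIntegral g i + (u - i) * g i := by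
  rw [← integral_comp_floor_of_mem_Icc g hu, ← floorIntegral_sub_floorIntegral, add_sub_cancel]

theorem floorIntegral_intCast_add_one (i : ℤ) :
    floorIntegral g (i + 1) = floorIntegral g i + g i := by
  rw [floorIntegral_of_mem_Icc g ⟨by linarith, le_rfl⟩, add_sub_cancel_left, one_mul]

end FloorIntegral

/-- The infinitely many distinct values `F k` cannot stay in a bounded interval, so `F` is
unbounded in both directions. -/
theorem surjective_of_strictMono_of_intCast_mem {F : ℝ → ℝ} {A : Set ℝ}
    (hF : StrictMono F) (hFc : Continuous F) (hA : ∀ a b, (Icc a b ∩ A).Finite)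
    (hFA : ∀ k : ℤ, F k ∈ A) : Surjective F := by
  have hFA_nat : ∀ k : ℕ, F k ∈ A ∧ F (-k) ∈ A := fun k =>
    ⟨by exact_mod_cast hFA k, by exact_mod_cast hFA (-k)⟩
  have h_top : ∀ c, ∃ r, c ≤ F r := by
    intro c
    by_contra! h
    refine Set.infinite_of_injective_forall_mem (hF.injective.comp Nat.cast_injective)
      (fun k : ℕ => ?_) (hA (F 0) c)
    exact ⟨⟨hF.monotone (Nat.cast_nonneg k), (h k).le⟩, (hFA_nat k).1⟩
  have h_bot : ∀ c, ∃ r, F r ≤ c := by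
    intro c
    by_contra! h
    refine Set.infinite_of_injective_forall_mem
      (hF.injective.comp (neg_injective.comp Nat.cast_injective)) (fun k : ℕ => ?_) (hA c (F 0))
    exact ⟨⟨(h _).le, hF.monotone (neg_nonpos.2 (Nat.cast_nonneg k))⟩, (hFA_nat k).2⟩
  exact hFc.surjective (hF.monotone.tendsto_atTop_atTop h_top)
    (hF.monotone.tendsto_atBot_atBot h_bot)

section Flow

variable {X : Type*} [TopologicalSpace X] {Φ : X → ℝ → X}

theorem FlowLaw.continuous_orbit (law : FlowLaw Φ) (y : X) : Continuous (Φ y) :=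
  law.cont.comp (Continuous.prodMk_right y)

theorem FlowLaw.eq_of_step (law : FlowLaw Φ) {p : ℤ → X} {F : ℤ → ℝ}
    (hp : ∀ k, p (k + 1) = Φ (p k) (F (k + 1) - F k)) (k : ℤ) :
    p k = Φ (p 0) (F k - F 0) := by
  induction k using Int.induction_on with
  | zero => rw [sub_self, law.map_zero]
  | succ k ih => rw [hp, ih, law.map_add, sub_add_sub_cancel']
  | pred k ih =>
    have h := hp (-(k : ℤ) - 1)
    rw [sub_add_cancel] at h
    have hsplit : F (-k - 1) - F 0 = (F (-k) - F 0) + (F (-k - 1) - F (-k)) := by ring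
    rw [hsplit, ← law.map_add, ← ih, h, law.map_add, sub_add_sub_cancel, sub_self, law.map_zero]

theorem FlowLaw.zpow_apply_eq_floorIntegral (law : FlowLaw Φ) {S : Set X} {T : X → ℝ}
    {Pr : S ≃ₜ S} (hPr : ∀ y : S, (Pr y : X) = Φ y (T y)) (x : S) (k : ℤ) :
    ((Pr.toEquiv ^ k) x : X) = Φ x (floorIntegral (fun i => T ((Pr.toEquiv ^ i) x)) k) := by
  set F : ℤ → ℝ := fun k => floorIntegral (fun i => T ((Pr.toEquiv ^ i) x)) k
  have hstep : ∀ k : ℤ,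
      ((Pr.toEquiv ^ (k + 1)) x : X) = Φ ((Pr.toEquiv ^ k) x) (F (k + 1) - F k) := by
    intro k
    have hF : F (k + 1) - F k = T ((Pr.toEquiv ^ k) x) := by
      simp only [F, Int.cast_add, Int.cast_one, floorIntegral_intCast_add_one, add_sub_cancel_left]
    rw [hF, ← hPr, add_comm k, zpow_one_add, Equiv.Perm.mul_apply, Homeomorph.coe_toEquiv]
  have h := law.eq_of_step (p := fun k => ((Pr.toEquiv ^ k) x : X)) hstep k
  simpa only [F, Int.cast_zero, floorIntegral_zero, sub_zero, zpow_zero, Equiv.Perm.one_apply]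
    using h

theorem IsTransversal.eventually_notMem {n : ℕ} {S : Set X} (hS : IsTransversal n Φ S)
    {z : X} (hz : z ∈ S) : ∀ᶠ r in 𝓝[≠] (0 : ℝ), Φ z r ∉ S := by
  obtain ⟨δp, δm, hδ, htr⟩ := hS.trans
  obtain ⟨U, -, -, -, hav, -⟩ := htr z hz
  filter_upwards [self_mem_nhdsWithin,
    nhdsWithin_le_nhds (Icc_mem_nhds (hδ z hz).2 (hδ z hz).1)] with r hr0 hr
  exact (hav r hr hr0).2

/-- The hitting times form a compact set (by `compact_inter`) without accumulation points
(each hit is isolated in time by transversality). -/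
theorem IsTransversal.finite_hitTimes [T2Space X] (law : FlowLaw Φ) {n : ℕ} {S : Set X}
    (hS : IsTransversal n Φ S) (y : X) (a b : ℝ) : (Icc a b ∩ {s | Φ y s ∈ S}).Finite := by
  have hcompact : IsCompact (Icc a b ∩ {s | Φ y s ∈ S}) := by
    have h : Icc a b ∩ {s | Φ y s ∈ S} = Icc a b ∩ Φ y ⁻¹' (Φ y '' Icc a b ∩ S) := by
      ext s
      exact ⟨fun h => ⟨h.1, ⟨s, h.1, rfl⟩, h.2⟩, fun h => ⟨h.1, h.2.2⟩⟩
    rw [h]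
    exact isCompact_Icc.inter_right
      ((hS.compact_inter y a b).isClosed.preimage (law.continuous_orbit y))
  refine hcompact.finite (isDiscrete_iff_nhdsNE.2 fun s hs => ?_)
  rw [inf_principal_eq_bot]
  have hshift : Tendsto (· - s) (𝓝[≠] s) (𝓝[≠] 0) :=
    tendsto_nhdsWithin_iff.2
      ⟨((continuous_sub_right s).tendsto' s 0 (sub_self s)).mono_left nhdsWithin_le_nhds,
        eventually_nhdsWithin_of_forall fun s' hs' => sub_ne_zero.2 hs'⟩
  filter_upwards [hshift.eventually (hS.eventually_notMem hs.2)] with s' hs' hmem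
  rw [law.map_add, add_sub_cancel] at hs'
  exact hs' hmem.2

end Flow

theorem tauTime_increasing_homeomorph_general {X : Type*} [TopologicalSpace X] [T2Space X]
    {n : ℕ} (Φ : X → ℝ → X) (S : Set X)
    (law : FlowLaw Φ) (hgs : IsGlobalSection n Φ S)
    (T : X → ℝ) (hT : IsFirstReturn Φ S T)
    (Pr : ↥S ≃ₜ ↥S) (hPr : ∀ x : ↥S, (Pr x : X) = Φ x (T x))
    (x : ↥S) (t : ℝ) (ht0 : 0 ≤ t) (ht1 : t < 1) :
    StrictMono (fun s => tauTime T Pr x t s) ∧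
    Continuous (fun s => tauTime T Pr x t s) ∧
    Function.Surjective (fun s => tauTime T Pr x t s) ∧
    tauTime T Pr x t 0 = 0 := by
  set g : ℤ → ℝ := fun k => T ((Pr.toEquiv ^ k) x)
  have hg0 : g 0 = T x := by simp [g]
  have htau : ∀ s, tauTime T Pr x t s = floorIntegral g (s + t) - t * g 0 := fun s => by
    rw [hg0]; rfl
  have hF : StrictMono (floorIntegral g) :=
    strictMono_floorIntegral g fun k => (hT _ ((Pr.toEquiv ^ k) x).2).1
  have horbit : ∀ k : ℤ, Φ x (floorIntegral g k) ∈ S := fun k =>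
    law.zpow_apply_eq_floorIntegral hPr x k ▸ ((Pr.toEquiv ^ k) x).2
  have hsurj := surjective_of_strictMono_of_intCast_mem hF (continuous_floorIntegral g)
    (hgs.transversal.finite_hitTimes law x) horbit
  refine ⟨fun a b hab => ?_, ?_, fun c => ?_, ?_⟩
  · simpa only [htau, sub_lt_sub_iff_right] using hF (show a + t < b + t by linarith)
  · simp only [htau]
    exact ((continuous_floorIntegral g).comp (continuous_add_const t)).sub continuous_const
  · obtain ⟨r, hr⟩ := hsurj (c + t * g 0)
    exact ⟨r - t, by simp only [htau, sub_add_cancel, hr, add_sub_cancel_right]⟩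
  · have h := floorIntegral_of_mem_Icc g (i := 0) (u := t)
      ⟨by simpa using ht0, by simpa using ht1.le⟩
    rw [htau, zero_add, h, Int.cast_zero, floorIntegral_zero, zero_add, sub_zero, sub_self]

/-- for each `x ∈ S` and `0 ≤ t < 1`, the map
`s ↦ τ([x,t],s) = ∫₀^{s+t} R_Φ(x)(u) du − t·T(x)` is a strictly increasing
homeomorphism of `ℝ` with `τ([x,t],0) = 0`. -/
theorem tauTime_increasing_homeomorph {X : Type*} [TopologicalSpace X] [T2Space X]
    [SecondCountableTopology X] {n : ℕ} (Φ : X → ℝ → X) (S : Set X)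
    (law : FlowLaw Φ) (hgs : IsGlobalSection n Φ S)
    (T : X → ℝ) (hT : IsFirstReturn Φ S T) (hTc : ContinuousOn T S)
    (Pr : ↥S ≃ₜ ↥S) (hPr : ∀ x : ↥S, (Pr x : X) = Φ x (T x))
    (x : ↥S) (t : ℝ) (ht0 : 0 ≤ t) (ht1 : t < 1) :
    StrictMono (fun s => tauTime T Pr x t s) ∧
    Continuous (fun s => tauTime T Pr x t s) ∧
    Function.Surjective (fun s => tauTime T Pr x t s) ∧
    tauTime T Pr x t 0 = 0 :=
  tauTime_increasing_homeomorph_general Φ S law hgs T hT Pr hPr x t ht0 ht1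
end
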